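/- For all integers ℓ ≥ 2 and reals τ ≥ 1 there exists a constant C̃ = C̃(ℓ, τ) > 0 as follows. Let s ≥ ℓ, let M ≥ 1 be an integer, let 0 < Δ with M < 1/Δ, set α := MΔ, and let ω = (ω_1, …, ω_s) be pairwise distinct points in [0, 1) with ω_j = τ_j·(α/M) for 1 ≤ j ≤ ℓ, where 0 = τ_1 < τ_2 < … < τ_ℓ ≤ τ and |τ_i − τ_j| ≥ 1 for i ≠ j (the remaining ω_j arbitrary). Let (A_1, …, A_ℓ, B_1, …, B_ℓ) solve U_{2ℓ}(h)·(A; B)ᵀ = (0, …, 0, (2ℓ−1)!)ᵀ with h_i = −τ_i·(α/M), and define u ∈ ℂ^{2s} by u_j := (α/M)^{2ℓ−1}·A_j and u_{s+j} := (α/M)^{2ℓ−1}·2πi·z_j·B_j for 1 ≤ j ≤ ℓ, where z_j = exp(−2πi ω_j), and u_j = u_{s+j} = 0 otherwise. Then ‖Φ_M(ω)·u‖₂ ≤ √(M+1) · (2πα)^{2ℓ−1} · (1 + C̃ · 2πα). -/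

import Mathlib

open scoped BigOperators

/-- The square `2ℓ × 2ℓ` confluent Vandermonde matrix `U_{2ℓ}(h)`: rows `k = 0, …, 2ℓ-1`,
entry `h_j^k` in column `j` and `k h_j^{k-1}` in column `ℓ + j`. -/
noncomputable def U2l (ℓ : ℕ) (h : Fin ℓ → ℝ) : Matrix (Fin (2 * ℓ)) (Fin ℓ ⊕ Fin ℓ) ℂ :=
  fun k => Sum.elim (fun j => ((h j : ℂ)) ^ (k : ℕ))
    (fun j => ((k : ℕ) : ℂ) * ((h j : ℂ)) ^ ((k : ℕ) - 1))

/-- The right-hand side `(0, …, 0, (2ℓ-1)!)ᵀ` of the finite-difference linear system. -/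
noncomputable def fdRhs (ℓ : ℕ) : Fin (2 * ℓ) → ℂ :=
  fun k => if (k : ℕ) = 2 * ℓ - 1 then ((2 * ℓ - 1).factorial : ℂ) else 0

/-- The discrete ℓ² norm of a vector. -/
noncomputable def l2norm {n : Type*} [Fintype n] (v : n → ℂ) : ℝ :=
  Real.sqrt (∑ i, ‖v i‖ ^ 2)

/-- The `(M+1) × 2s` confluent Vandermonde matrix `Φ_M(ω)` with nodes `z_j = exp(-2πi ω_j)`:
rows `k = 0, …, M`, entry `z_j^k` in column `j` and `k z_j^{k-1}` in column `s + j`. -/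
noncomputable def PhiMat (M s : ℕ) (ω : Fin s → ℝ) : Matrix (Fin (M + 1)) (Fin s ⊕ Fin s) ℂ :=
  fun k => Sum.elim
    (fun j => Complex.exp (-(2 * (Real.pi : ℂ) * Complex.I * (ω j : ℂ))) ^ (k : ℕ))
    (fun j => ((k : ℕ) : ℂ) *
      Complex.exp (-(2 * (Real.pi : ℂ) * Complex.I * (ω j : ℂ))) ^ ((k : ℕ) - 1))

/-!
Row `k` of `Φ_M(ω) u` is `(α/M)^{2ℓ-1} E(w)` with `w = 2πik` and `E(w) = ∑ⱼ (Aⱼ + w Bⱼ) e^{w hⱼ}`.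
The Taylor coefficients of `E` are the moments `L(X^m)` of the Hermite functional
`L q = ∑ⱼ (Aⱼ q(hⱼ) + Bⱼ q'(hⱼ))`, and the linear system says that `L(X^m) = 0` for `m < 2ℓ-1` and
`L(X^{2ℓ-1}) = (2ℓ-1)!`, so `E(w) = w^{2ℓ-1} + O(w^{2ℓ})`. To make the error uniform, note that
`L` kills the multiples of `∏ⱼ (X - hⱼ)²`: this gives a linear recurrence for the moments whose
coefficients are controlled by `H ≥ |hⱼ|`, hence `|L(X^m)| ≤ m^{\underline{2ℓ-1}} (cH)^{m-2ℓ+1}`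
with `c = 2ℓ 4^ℓ`, and `|E(w) - w^{2ℓ-1}| ≤ |w|^{2ℓ-1} (e^{c|w|H} - 1)`. With `H = τα/M` and
`|w| ≤ 2πM` the exponent is `O(α)`, and `α < 1`.
-/

open Polynomial Finset Real
open scoped Nat Matrix

namespace Polynomial

theorem Monic.apply_X_pow_natDegree_add {R : Type*} [CommRing R] (L : R[X] →ₗ[R] R)
    {P : R[X]} (hP : P.Monic) (hL : ∀ r, L (P * X ^ r) = 0) (r : ℕ) :
    L (X ^ (P.natDegree + r)) = -∑ i ∈ range P.natDegree, P.coeff i * L (X ^ (i + r)) := by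
  have h := hL r
  rw [hP.as_sum] at h
  simp only [add_mul, sum_mul, C_mul', smul_mul_assoc, ← pow_add, map_add, map_sum, map_smul,
    smul_eq_mul] at h
  linear_combination h

end Polynomial

theorem Real.exp_le_one_add_mul_of_le_mul {y a α : ℝ} (hy : 0 ≤ y) (ha : 0 ≤ a) (hα : α ≤ 1)
    (hya : y ≤ a * α) : Real.exp y ≤ 1 + a * Real.exp a * α := by
  have hneg : (1 - y) * Real.exp y ≤ 1 := by
    have := mul_le_mul_of_nonneg_right (Real.add_one_le_exp (-y)) (Real.exp_pos y).le
    rwa [← Real.exp_add, neg_add_cancel, Real.exp_zero, neg_add_eq_sub] at this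
  have hexp : Real.exp y ≤ Real.exp a := Real.exp_le_exp.2 (by nlinarith)
  nlinarith [Real.exp_pos y]

theorem norm_le_descFactorial_mul_pow_of_recurrence {R : Type*} [SeminormedRing R]
    {S c : ℕ → R} {d : ℕ} {K H : ℝ} (hK : 1 ≤ (d + 1) * K) (hH : 0 ≤ H)
    (hc : ∀ i < d + 1, ‖c i‖ ≤ K * H ^ (d + 1 - i))
    (hrec : ∀ r, S (d + 1 + r) = -∑ i ∈ range (d + 1), c i * S (i + r))
    (hlow : ∀ m < d, S m = 0) (htop : ‖S d‖ ≤ d !) (j : ℕ) :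
    ‖S (d + j)‖ ≤ (d + j).descFactorial d * ((d + 1) * K * H) ^ j := by
  have hK0 : 0 ≤ K := (pos_of_mul_pos_right (one_pos.trans_le hK) (by positivity)).le
  induction j using Nat.strong_induction_on with
  | _ j ih =>
  rcases j with _ | r
  · simpa [Nat.descFactorial_self] using htop
  have hterm : ∀ i ∈ range (d + 1), ‖c i * S (i + r)‖ ≤
      K * ((d + (r + 1)).descFactorial d * ((d + 1) * K) ^ r * H ^ (r + 1)) := by
    intro i hi
    rw [mem_range] at hi
    rcases lt_or_ge (i + r) d with hlt | hge
    · rw [hlow _ hlt, mul_zero, norm_zero]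
      positivity
    obtain ⟨j, hj⟩ : ∃ j, i + r = d + j := ⟨i + r - d, by omega⟩
    calc ‖c i * S (i + r)‖ ≤ ‖c i‖ * ‖S (d + j)‖ := hj ▸ norm_mul_le _ _
      _ ≤ (K * H ^ (d + 1 - i)) * ((d + j).descFactorial d * ((d + 1) * K * H) ^ j) := by
        gcongr
        exacts [hc i hi, ih j (by omega)]
      _ = K * ((d + j).descFactorial d * ((d + 1) * K) ^ j * H ^ (r + 1)) := by
        rw [mul_pow, show r + 1 = (d + 1 - i) + j by omega, pow_add]
        ring
      _ ≤ K * ((d + (r + 1)).descFactorial d * ((d + 1) * K) ^ r * H ^ (r + 1)) := by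
        gcongr <;> omega
  calc ‖S (d + (r + 1))‖ = ‖∑ i ∈ range (d + 1), c i * S (i + r)‖ := by
        rw [show d + (r + 1) = d + 1 + r by ring, hrec, norm_neg]
    _ ≤ ∑ i ∈ range (d + 1), ‖c i * S (i + r)‖ := norm_sum_le _ _
    _ ≤ ∑ i ∈ range (d + 1),
          K * ((d + (r + 1)).descFactorial d * ((d + 1) * K) ^ r * H ^ (r + 1)) :=
        sum_le_sum hterm
    _ = (d + (r + 1)).descFactorial d * ((d + 1) * K * H) ^ (r + 1) := by
        rw [sum_const, card_range, nsmul_eq_mul, mul_pow ((d + 1 : ℝ) * K) H]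
        push_cast
        ring

section Hermite

variable {ι : Type*} [Fintype ι] (h A B : ι → ℂ)

noncomputable def hermiteFunctional : ℂ[X] →ₗ[ℂ] ℂ :=
  ∑ j, (A j • leval (h j) + B j • leval (h j) ∘ₗ derivative)

theorem hermiteFunctional_apply (q : ℂ[X]) :
    hermiteFunctional h A B q = ∑ j, (A j * q.eval (h j) + B j * q.derivative.eval (h j)) := by
  simp [hermiteFunctional]

theorem hermiteFunctional_X_pow (m : ℕ) :
    hermiteFunctional h A B (X ^ m) = ∑ j, (A j * h j ^ m + B j * (m * h j ^ (m - 1))) := by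
  simp [hermiteFunctional_apply, derivative_X_pow]

noncomputable def hermiteNodePoly : ℂ[X] :=
  ∏ j, (X - C (h j)) ^ 2

theorem hermiteNodePoly_monic : (hermiteNodePoly h).Monic :=
  monic_prod_of_monic _ _ fun _ _ => (monic_X_sub_C _).pow 2

theorem natDegree_hermiteNodePoly : (hermiteNodePoly h).natDegree = 2 * Fintype.card ι := by
  rw [hermiteNodePoly, natDegree_prod_of_monic _ _ fun j _ => (monic_X_sub_C _).pow 2]
  simp [mul_comm]

theorem hermiteFunctional_hermiteNodePoly_mul (q : ℂ[X]) :
    hermiteFunctional h A B (hermiteNodePoly h * q) = 0 := by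
  rw [hermiteFunctional_apply]
  refine sum_eq_zero fun j _ => ?_
  obtain ⟨g, hg⟩ : (X - C (h j)) ^ 2 ∣ hermiteNodePoly h * q :=
    (dvd_prod_of_mem _ (mem_univ j)).mul_right _
  simp [hg, derivative_mul, derivative_pow]

theorem norm_coeff_hermiteNodePoly_le {H : ℝ} (hh : ∀ j, ‖h j‖ ≤ H) (i : ℕ) :
    ‖(hermiteNodePoly h).coeff i‖ ≤ 2 ^ (2 * Fintype.card ι) * H ^ (2 * Fintype.card ι - i) := by
  have hroots : ∀ z ∈ ((hermiteNodePoly h).map (RingHom.id ℂ)).roots, ‖z‖ ≤ H := by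
    intro z hz
    rw [map_id, mem_roots (hermiteNodePoly_monic h).ne_zero, IsRoot, hermiteNodePoly,
      eval_prod, prod_eq_zero_iff] at hz
    obtain ⟨j, -, hj⟩ := hz
    have hz : z = h j := sub_eq_zero.1 (by simpa using hj)
    exact hz ▸ hh j
  have := coeff_le_of_roots_le i (hermiteNodePoly_monic h) (IsAlgClosed.splits _) hroots
  rw [map_id, natDegree_hermiteNodePoly] at this
  refine this.trans ?_
  rw [mul_comm]
  gcongr
  · rcases isEmpty_or_nonempty ι with hι | ⟨⟨j⟩⟩
    · simp
    · exact pow_nonneg ((norm_nonneg _).trans (hh j)) _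
  · exact_mod_cast Nat.choose_le_two_pow _ _

theorem hasSum_pow_div_factorial_mul_hermiteFunctional (w : ℂ) :
    HasSum (fun m => w ^ m / m ! * hermiteFunctional h A B (X ^ m))
      (∑ j, (A j + w * B j) * Complex.exp (w * h j)) := by
  have hexp (z : ℂ) : HasSum (fun m => z ^ m / m !) (Complex.exp z) := by
    rw [Complex.exp_eq_exp_ℂ]
    exact NormedSpace.expSeries_div_hasSum_exp z
  have hderiv (x : ℂ) :
      HasSum (fun m => w ^ m / m ! * (m * x ^ (m - 1))) (w * Complex.exp (w * x)) := by
    refine (hasSum_nat_add_iff' 1).mp ?_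
    simp only [range_one, sum_singleton, CharP.cast_eq_zero, zero_mul, mul_zero, sub_zero]
    refine ((hexp (w * x)).mul_left w).congr_fun fun m => ?_
    rw [Nat.factorial_succ]
    push_cast
    field_simp
    ring
  simp only [hermiteFunctional_X_pow, mul_sum]
  refine hasSum_sum fun j _ => ?_
  have hj := ((hexp (w * h j)).mul_left (A j)).add ((hderiv (h j)).mul_left (B j))
  rw [show (A j + w * B j) * Complex.exp (w * h j) =
    A j * Complex.exp (w * h j) + B j * (w * Complex.exp (w * h j)) by ring]
  exact hj.congr_fun fun m => by rw [mul_pow]; ring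

theorem norm_hermiteFunctional_X_pow_add_le {d : ℕ} (hd : 2 * Fintype.card ι = d + 1) {H : ℝ}
    (hh : ∀ j, ‖h j‖ ≤ H) (hlow : ∀ m < d, hermiteFunctional h A B (X ^ m) = 0)
    (htop : hermiteFunctional h A B (X ^ d) = d !) (n : ℕ) :
    ‖hermiteFunctional h A B (X ^ (d + n))‖ ≤
      (d + n).descFactorial d * ((d + 1) * 2 ^ (d + 1) * H) ^ n := by
  obtain ⟨j₀⟩ : Nonempty ι := Fintype.card_pos_iff.mp (by omega)
  refine norm_le_descFactorial_mul_pow_of_recurrence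
    (one_le_mul_of_one_le_of_one_le (by simp) (one_le_pow₀ one_le_two))
    ((norm_nonneg _).trans (hh j₀))
    (fun i _ => by simpa [hd] using norm_coeff_hermiteNodePoly_le h hh i) (fun r => ?_) hlow
    (by simp [htop]) n
  simpa [natDegree_hermiteNodePoly, hd] using (hermiteNodePoly_monic h).apply_X_pow_natDegree_add
    _ (fun r => hermiteFunctional_hermiteNodePoly_mul h A B _) r

theorem norm_sum_exp_sub_pow_le {d : ℕ} (hd : 2 * Fintype.card ι = d + 1) {H : ℝ}
    (hh : ∀ j, ‖h j‖ ≤ H) (hlow : ∀ m < d, hermiteFunctional h A B (X ^ m) = 0)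
    (htop : hermiteFunctional h A B (X ^ d) = d !) (w : ℂ) :
    ‖∑ j, (A j + w * B j) * Complex.exp (w * h j) - w ^ d‖ ≤
      ‖w‖ ^ d * (Real.exp (‖w‖ * ((d + 1) * 2 ^ (d + 1) * H)) - 1) := by
  have hmoment := norm_hermiteFunctional_X_pow_add_le h A B hd hh hlow htop
  generalize (d + 1 : ℝ) * 2 ^ (d + 1) * H = G at hmoment ⊢
  have hhead : ∑ m ∈ range (d + 1), w ^ m / m ! * hermiteFunctional h A B (X ^ m) = w ^ d := by
    rw [sum_range_succ, sum_eq_zero fun m hm => by rw [hlow m (mem_range.1 hm), mul_zero], htop,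
      zero_add, div_mul_cancel₀ _ (by exact_mod_cast d.factorial_ne_zero)]
  have htail := (hasSum_nat_add_iff' (d + 1)).mpr
    (hasSum_pow_div_factorial_mul_hermiteFunctional h A B w)
  rw [hhead] at htail
  have hexp : HasSum (fun n => (‖w‖ * G) ^ (n + 1) / (n + 1)!) (Real.exp (‖w‖ * G) - 1) := by
    have := NormedSpace.expSeries_div_hasSum_exp (‖w‖ * G)
    rw [← Real.exp_eq_exp_ℝ, ← hasSum_nat_add_iff' 1] at this
    simpa using this
  refine htail.norm_le_of_bounded (hexp.mul_left (‖w‖ ^ d)) fun n => ?_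
  have hfact := Nat.factorial_mul_descFactorial (Nat.le_add_right d (n + 1))
  rw [Nat.add_sub_cancel_left] at hfact
  rw [norm_mul, norm_div, norm_pow, Complex.norm_natCast, show n + (d + 1) = d + (n + 1) by ring]
  calc ‖w‖ ^ (d + (n + 1)) / (d + (n + 1))! * ‖hermiteFunctional h A B (X ^ (d + (n + 1)))‖
      ≤ ‖w‖ ^ (d + (n + 1)) / (d + (n + 1))! * ((d + (n + 1)).descFactorial d * G ^ (n + 1)) := by
        gcongr
        exact hmoment _
    _ = ‖w‖ ^ d * ((‖w‖ * G) ^ (n + 1) / (n + 1)!) := by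
        rw [← hfact]
        push_cast
        field_simp
        ring

theorem norm_pow_mul_sum_exp_le {d M k : ℕ} (hd : 2 * Fintype.card ι = d + 1) (hM : 0 < M)
    (hk : k ≤ M) {τ α : ℝ} (hτ : 0 ≤ τ) (hα0 : 0 ≤ α) (hα1 : α ≤ 1)
    (hh : ∀ j, ‖h j‖ ≤ τ * (α / M)) (hlow : ∀ m < d, hermiteFunctional h A B (X ^ m) = 0)
    (htop : hermiteFunctional h A B (X ^ d) = d !) :
    ‖((α / M : ℝ) : ℂ) ^ d * ∑ j, (A j + 2 * π * Complex.I * k * B j) *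
        Complex.exp (2 * π * Complex.I * k * h j)‖ ≤
      (2 * π * α) ^ d * (1 + τ * ((d + 1) * 2 ^ (d + 1)) *
        Real.exp (2 * π * τ * ((d + 1) * 2 ^ (d + 1))) * (2 * π * α)) := by
  set K : ℝ := (d + 1) * 2 ^ (d + 1)
  set w : ℂ := 2 * π * Complex.I * k
  have hM0 : (0 : ℝ) < M := by exact_mod_cast hM
  have hw : ‖w‖ ≤ 2 * π * M := by
    simp only [w, norm_mul, Complex.norm_ofNat, Complex.norm_real, Complex.norm_I,
      Complex.norm_natCast, Real.norm_of_nonneg pi_pos.le, mul_one]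
    gcongr
  have hy : ‖w‖ * (K * (τ * (α / M))) ≤ 2 * π * τ * K * α :=
    calc ‖w‖ * (K * (τ * (α / M))) ≤ 2 * π * M * (K * (τ * (α / M))) := by gcongr
      _ = 2 * π * τ * K * α := by field_simp
  have hE := norm_sum_exp_sub_pow_le h A B hd hh hlow htop w
  have hE' := norm_le_norm_add_norm_sub' (∑ j, (A j + w * B j) * Complex.exp (w * h j)) (w ^ d)
  rw [norm_pow] at hE'
  calc ‖((α / M : ℝ) : ℂ) ^ d * ∑ j, (A j + w * B j) * Complex.exp (w * h j)‖
      ≤ (α / M) ^ d * (‖w‖ ^ d * Real.exp (‖w‖ * (K * (τ * (α / M))))) := by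
        rw [norm_mul, norm_pow, Complex.norm_real, Real.norm_of_nonneg (by positivity)]
        gcongr
        linarith
    _ = (α / M * ‖w‖) ^ d * Real.exp (‖w‖ * (K * (τ * (α / M)))) := by ring
    _ ≤ (2 * π * α) ^ d * (1 + τ * K * Real.exp (2 * π * τ * K) * (2 * π * α)) := by
        gcongr ?_ ^ d * ?_
        · rw [div_mul_eq_mul_div, div_le_iff₀ hM0]
          nlinarith
        · exact (Real.exp_le_one_add_mul_of_le_mul (by positivity) (by positivity) hα1 hy).trans_eq
            (by ring)

end Hermite

theorem U2l_mulVec_apply (ℓ : ℕ) (h : Fin ℓ → ℝ) (A B : Fin ℓ → ℂ) (k : Fin (2 * ℓ)) :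
    (U2l ℓ h *ᵥ Sum.elim A B) k = hermiteFunctional (fun j => (h j : ℂ)) A B (X ^ (k : ℕ)) := by
  simp only [Matrix.mulVec, dotProduct, U2l, Fintype.sum_sum_type, Sum.elim_inl, Sum.elim_inr,
    hermiteFunctional_X_pow, sum_add_distrib]
  congr 1 <;> exact sum_congr rfl fun j _ => by ring

theorem PhiMat_mulVec_apply {M s ℓ : ℕ} (hs : ℓ ≤ s) (ω : Fin s → ℝ) (c : ℂ)
    (A B : Fin ℓ → ℂ) (k : Fin (M + 1)) :
    (PhiMat M s ω *ᵥ Sum.elim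
      (fun j : Fin s => if hj : (j : ℕ) < ℓ then c * A ⟨j, hj⟩ else 0)
      (fun j : Fin s => if hj : (j : ℕ) < ℓ then
          c * (2 * (π : ℂ) * Complex.I) * Complex.exp (-(2 * (π : ℂ) * Complex.I * (ω j : ℂ))) *
            B ⟨j, hj⟩
        else 0)) k =
      c * ∑ i : Fin ℓ, (A i + 2 * π * Complex.I * (k : ℕ) * B i) *
        Complex.exp (2 * π * Complex.I * (k : ℕ) * -(ω (Fin.castLE hs i) : ℂ)) := by
  simp only [Matrix.mulVec, dotProduct, PhiMat, Fintype.sum_sum_type, Sum.elim_inl, Sum.elim_inr,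
    ← sum_add_distrib, mul_sum]
  symm
  refine Fintype.sum_of_injective (Fin.castLE hs) (Fin.castLE_injective hs) _ _ ?_ fun i => ?_
  · rintro j hj
    have hjℓ : ¬ (j : ℕ) < ℓ := fun hlt => hj ⟨⟨j, hlt⟩, rfl⟩
    simp [hjℓ]
  · simp only [Fin.val_castLE, i.is_lt, dif_pos, Fin.eta]
    set z := Complex.exp (-(2 * (π : ℂ) * Complex.I * (ω (Fin.castLE hs i) : ℂ)))
    have hz : Complex.exp (2 * π * Complex.I * (k : ℕ) * -(ω (Fin.castLE hs i) : ℂ)) =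
        z ^ (k : ℕ) := by
      rw [← Complex.exp_nat_mul]
      ring_nf
    rw [hz]
    rcases eq_or_ne (k : ℕ) 0 with hk | hk
    · simp [hk]
    · rw [← pow_sub_one_mul hk z]
      ring

theorem l2norm_le_of_norm_le {n : Type*} [Fintype n] {v : n → ℂ} {R : ℝ} (hR : 0 ≤ R)
    (hv : ∀ i, ‖v i‖ ≤ R) : l2norm v ≤ √(Fintype.card n) * R :=
  calc l2norm v ≤ √(∑ _i : n, R ^ 2) :=
        Real.sqrt_le_sqrt (sum_le_sum fun i _ => pow_le_pow_left₀ (norm_nonneg _) (hv i) 2)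
    _ = √(Fintype.card n) * R := by
        rw [sum_const, card_univ, nsmul_eq_mul, Real.sqrt_mul (by positivity), Real.sqrt_sq hR]

/-- Lemma (upper bound for the image of the candidate singular vector): there is
`C̃ = C̃(ℓ, τ) > 0` such that, with `α = MΔ`, a clustered head `ω_j = τ_j α/M` (`j ≤ ℓ`),
finite-difference weights `(A; B)` and the vector `u` built from them, one has
`‖Φ_M(ω) u‖₂ ≤ √(M+1) (2πα)^{2ℓ-1} (1 + C̃ 2πα)`. -/
theorem phi_mulvec_u_upper_bound (ℓ : ℕ) (hℓ : 2 ≤ ℓ) (τ : ℝ) (hτ : 1 ≤ τ) :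
    ∃ C : ℝ, 0 < C ∧
      ∀ (s : ℕ) (hs : ℓ ≤ s) (M : ℕ), 1 ≤ M →
        ∀ Δ : ℝ, 0 < Δ → (M : ℝ) < 1 / Δ →
        ∀ α : ℝ, α = (M : ℝ) * Δ →
        ∀ t : Fin ℓ → ℝ, t ⟨0, by omega⟩ = 0 → StrictMono t → (∀ i, t i ≤ τ) →
          (∀ i j : Fin ℓ, i ≠ j → 1 ≤ |t i - t j|) →
        ∀ ω : Fin s → ℝ, Function.Injective ω → (∀ j, ω j ∈ Set.Ico (0 : ℝ) 1) →
          (∀ j : Fin ℓ, ω (Fin.castLE hs j) = t j * (α / M)) →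
        ∀ A B : Fin ℓ → ℂ,
          (U2l ℓ (fun i => -(t i) * (α / M))).mulVec (Sum.elim A B) = fdRhs ℓ →
          l2norm ((PhiMat M s ω).mulVec (Sum.elim
            (fun j : Fin s => if hj : (j : ℕ) < ℓ then
                ((α / M : ℝ) : ℂ) ^ (2 * ℓ - 1) * A ⟨(j : ℕ), hj⟩ else 0)
            (fun j : Fin s => if hj : (j : ℕ) < ℓ then
                ((α / M : ℝ) : ℂ) ^ (2 * ℓ - 1) * (2 * (Real.pi : ℂ) * Complex.I) *
                  Complex.exp (-(2 * (Real.pi : ℂ) * Complex.I * (ω j : ℂ))) * B ⟨(j : ℕ), hj⟩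
              else 0))) ≤
          Real.sqrt ((M : ℝ) + 1) * (2 * Real.pi * α) ^ (2 * ℓ - 1) *
            (1 + C * (2 * Real.pi * α)) := by
  set d := 2 * ℓ - 1
  set C := τ * ((d + 1) * 2 ^ (d + 1)) * Real.exp (2 * π * τ * ((d + 1) * 2 ^ (d + 1)))
  refine ⟨C, by positivity, ?_⟩
  intro s hs M hM Δ hΔ hMΔ α hα t ht0 htmono htle _ ω _ _ hωhead A B hsys
  have hM0 : (0 : ℝ) < M := by exact_mod_cast hM
  have hα0 : 0 < α := hα ▸ mul_pos hM0 hΔ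
  have hα1 : α ≤ 1 := by rw [hα, ← le_div_iff₀ hΔ]; exact hMΔ.le
  set h : Fin ℓ → ℂ := fun i => ((-(t i) * (α / M) : ℝ) : ℂ)
  have hh (i : Fin ℓ) : ‖h i‖ ≤ τ * (α / M) := by
    have hti : 0 ≤ t i := ht0 ▸ htmono.monotone (Fin.mk_le_of_le_val (Nat.zero_le _))
    simp only [h, Complex.norm_real, norm_mul, norm_neg, Real.norm_of_nonneg hti,
      Real.norm_of_nonneg (div_pos hα0 hM0).le]
    gcongr
    exact htle i
  have hmoment (m : ℕ) (hm : m < 2 * ℓ) : hermiteFunctional h A B (X ^ m) = fdRhs ℓ ⟨m, hm⟩ := by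
    rw [← hsys, U2l_mulVec_apply]
  have hnodes (i : Fin ℓ) : -(ω (Fin.castLE hs i) : ℂ) = h i := by simp [h, hωhead]
  refine (l2norm_le_of_norm_le (R := (2 * π * α) ^ d * (1 + C * (2 * π * α))) (by positivity)
    fun k => ?_).trans_eq (by simp [mul_assoc])
  rw [PhiMat_mulVec_apply hs]
  simp only [hnodes]
  exact norm_pow_mul_sum_exp_le h A B (d := d) (by simp; omega) hM (Nat.lt_succ_iff.mp k.is_lt)
    (by positivity) hα0.le hα1 hh (fun m hm => by rw [hmoment m (by omega), fdRhs, if_neg hm.ne])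
    (by rw [hmoment d (by omega), fdRhs, if_pos rfl])
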